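/- Let ν > 0 be real and not an integer, and define the Weber function by 𝐄_ν(z) = (1/π) ∫_0^π sin(νθ − z sin θ) dθ for z ∈ ℂ. Set 𝐞_0(ν) = −(1 + cos(πν))/π and 𝐞_{−1}(ν) = −ν(1 − cos(πν))/π. Then for every z in the cut plane ℂ ∖ (−∞,0]: 𝐄_ν(z) = 𝐞_0(ν) S^{(0)}_{0,ν}(z) + 𝐞_{−1}(ν) S^{(0)}_{−1,ν}(z), and also 𝐄_ν(z) = 𝐞_0(ν) S_{0,ν}(z) + 𝐞_{−1}(ν) S_{−1,ν}(z) − Y_ν(z). -/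

import Mathlib

/-- Bessel function of the first kind,
`J_ν(z) = Σ_{k=0}^∞ (-1)^k (z/2)^(ν+2k) / (k! Γ(ν+k+1))` (principal powers). -/
noncomputable def besselJ (ν z : ℂ) : ℂ :=
  ∑' k : ℕ, (-1 : ℂ) ^ k * (z / 2) ^ (ν + 2 * (k : ℂ)) /
    ((k.factorial : ℂ) * Complex.Gamma (ν + (k : ℂ) + 1))

/-- Bessel function of the second kind (noninteger order),
`Y_ν(z) = (J_ν(z) cos(νπ) - J_{-ν}(z)) / sin(νπ)`. -/
noncomputable def besselY (ν z : ℂ) : ℂ :=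
  (besselJ ν z * Complex.cos (ν * (Real.pi : ℂ)) - besselJ (-ν) z) /
    Complex.sin (ν * (Real.pi : ℂ))

/-- `a_k(μ,ν) = Π_{m=1}^{k} ((μ+2m-1)² - ν²)`. -/
noncomputable def lommelCoeff (μ ν : ℂ) (k : ℕ) : ℂ :=
  ∏ m ∈ Finset.range k, ((μ + 2 * ((m : ℂ) + 1) - 1) ^ 2 - ν ^ 2)

/-- The Lommel function `s_{μ,ν}(z) = z^(μ+1) Σ_{k=0}^∞ (-1)^k z^(2k) / a_{k+1}(μ,ν)`. -/
noncomputable def lommels (μ ν z : ℂ) : ℂ :=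
  z ^ (μ + 1) * ∑' k : ℕ, (-1 : ℂ) ^ k * z ^ (2 * k) / lommelCoeff μ ν (k + 1)

/-- `A(μ,ν) = 2^(μ-1) Γ(μ/2+ν/2+1/2) Γ(μ/2-ν/2+1/2)`. -/
noncomputable def lommelA (μ ν : ℂ) : ℂ :=
  (2 : ℂ) ^ (μ - 1) * Complex.Gamma (μ / 2 + ν / 2 + 1 / 2) *
    Complex.Gamma (μ / 2 - ν / 2 + 1 / 2)

/-- The Lommel function
`S_{μ,ν}(z) = s_{μ,ν}(z) + A(μ,ν){sin((μ-ν)π/2) J_ν(z) - cos((μ-ν)π/2) Y_ν(z)}`. -/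
noncomputable def lommelS (μ ν z : ℂ) : ℂ :=
  lommels μ ν z + lommelA μ ν *
    (Complex.sin ((μ - ν) * (Real.pi : ℂ) / 2) * besselJ ν z -
      Complex.cos ((μ - ν) * (Real.pi : ℂ) / 2) * besselY ν z)

/-- `S^(0)_{μ,ν}(z) = s_{μ,ν}(z) + A(μ,ν) sin((μ-ν)π/2) J_ν(z)`. -/
noncomputable def lommelS0 (μ ν z : ℂ) : ℂ :=
  lommels μ ν z + lommelA μ ν * Complex.sin ((μ - ν) * (Real.pi : ℂ) / 2) * besselJ ν z

/-- `S^(1)_{μ,ν}(z) = s_{μ,ν}(z) - i e^((μ-ν)πi/2) A(μ,ν) J_ν(z)`. -/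
noncomputable def lommelS1 (μ ν z : ℂ) : ℂ :=
  lommels μ ν z - Complex.I * Complex.exp ((μ - ν) * (Real.pi : ℂ) * Complex.I / 2) *
    lommelA μ ν * besselJ ν z

/-- `S^(2)_{μ,ν}(z) = s_{μ,ν}(z) + i e^((ν-μ)πi/2) A(μ,ν) J_ν(z)`. -/
noncomputable def lommelS2 (μ ν z : ℂ) : ℂ :=
  lommels μ ν z + Complex.I * Complex.exp ((ν - μ) * (Real.pi : ℂ) * Complex.I / 2) *
    lommelA μ ν * besselJ ν z

/-- The Weber function `𝐄_ν(z) = (1/π) ∫_0^π sin(νθ - z sin θ) dθ`. -/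
noncomputable def weberE (ν z : ℂ) : ℂ :=
  (1 / (Real.pi : ℂ)) * ∫ θ in (0 : ℝ)..Real.pi, Complex.sin (ν * (θ : ℂ) - z * Real.sin θ)

/-- `𝐞₀(ν) = -(1 + cos(πν))/π`. -/
noncomputable def webere0 (ν : ℝ) : ℂ :=
  -(1 + Complex.cos ((Real.pi : ℂ) * ν)) / (Real.pi : ℂ)

/-- `𝐞₋₁(ν) = -ν(1 - cos(πν))/π`. -/
noncomputable def weberem1 (ν : ℝ) : ℂ :=
  -(ν : ℂ) * (1 - Complex.cos ((Real.pi : ℂ) * ν)) / (Real.pi : ℂ)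

section WeberAux
open Complex Real MeasureTheory Filter

lemma nu_ne_zero (hint : ∀ n : ℤ, ν ≠ (n : ℝ)) : (ν:ℂ) ≠ 0 := by
  exact_mod_cast fun h => hint 0 (by exact_mod_cast h)

lemma sin_half_ne (hint : ∀ n : ℤ, ν ≠ (n : ℝ)) : Complex.sin ((π:ℂ) * ν / 2) ≠ 0 := by
  have : ((π:ℂ) * ν / 2) = ((π * ν / 2 : ℝ) : ℂ) := by push_cast; ring
  rw [this, ← Complex.ofReal_sin]
  simp only [ne_eq, Complex.ofReal_eq_zero]
  rw [Real.sin_eq_zero_iff]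
  rintro ⟨n, hn⟩
  have : ν = 2 * n := by
    field_simp at hn
    have : π * ν = π * (2 * n) := by rw [← hn]; ring
    exact (mul_left_cancel₀ Real.pi_ne_zero this)
  exact hint (2*n) (by push_cast [this]; ring)

lemma cos_half_ne (hint : ∀ n : ℤ, ν ≠ (n : ℝ)) : Complex.cos ((π:ℂ) * ν / 2) ≠ 0 := by
  have : ((π:ℂ) * ν / 2) = ((π * ν / 2 : ℝ) : ℂ) := by push_cast; ring
  rw [this, ← Complex.ofReal_cos]
  simp only [ne_eq, Complex.ofReal_eq_zero]
  rw [Real.cos_eq_zero_iff]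
  rintro ⟨n, hn⟩
  have : ν = 2 * n + 1 := by
    field_simp at hn
    have : π * ν = π * (2 * n + 1) := by rw [hn]
    exact (mul_left_cancel₀ Real.pi_ne_zero this)
  exact hint (2*n+1) (by push_cast [this]; ring)

lemma sq_sub_ne (hint : ∀ n : ℤ, ν ≠ (n : ℝ)) (n : ℕ) : ((n:ℂ)^2 - (ν:ℂ)^2) ≠ 0 := by
  have h1 : ν ≠ (n:ℝ) := hint n
  have h2 : ν ≠ -(n:ℝ) := fun h => hint (-n) (by push_cast; exact h)
  have hr : ((n:ℝ)^2 - ν^2) ≠ 0 := by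
    intro h
    rcases mul_eq_zero.1 (by nlinarith : ((n:ℝ) - ν) * ((n:ℝ) + ν) = 0) with h' | h'
    · exact h1 (by linarith)
    · exact h2 (by linarith)
  have : ((n:ℂ)^2 - (ν:ℂ)^2) = (((n:ℝ)^2 - ν^2 : ℝ) : ℂ) := by push_cast; ring
  rw [this]
  exact_mod_cast hr

lemma lommelA_zero (hint : ∀ n : ℤ, ν ≠ (n : ℝ)) :
    lommelA 0 (ν:ℂ) = (π:ℂ) / (2 * Complex.cos ((π:ℂ)*ν/2)) := by
  have h := Complex.Gamma_mul_Gamma_one_sub ((ν:ℂ)/2 + 1/2)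
  have e1 : (1:ℂ) - ((ν:ℂ)/2 + 1/2) = (0:ℂ)/2 - (ν:ℂ)/2 + 1/2 := by ring
  have e2 : (π:ℂ) * ((ν:ℂ)/2 + 1/2) = (π:ℂ)*ν/2 + (π:ℂ)/2 := by ring
  rw [e1, e2, Complex.sin_add, Complex.sin_pi_div_two, Complex.cos_pi_div_two] at h
  unfold lommelA
  have e3 : (0:ℂ)/2 + (ν:ℂ)/2 + 1/2 = (ν:ℂ)/2 + 1/2 := by ring
  rw [zero_sub, Complex.cpow_neg_one, e3, mul_assoc, h]
  have hc := cos_half_ne hint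
  field_simp
  simp [hc]

lemma lommelA_neg_one (hint : ∀ n : ℤ, ν ≠ (n : ℝ)) :
    lommelA (-1) (ν:ℂ) = -(π:ℂ) / (2 * (ν:ℂ) * Complex.sin ((π:ℂ)*ν/2)) := by
  have hn := nu_ne_zero hint
  have hs := sin_half_ne hint
  have h := Complex.Gamma_mul_Gamma_one_sub ((ν:ℂ)/2)
  have hadd : Complex.Gamma (-(ν:ℂ)/2 + 1) = (-(ν:ℂ)/2) * Complex.Gamma (-(ν:ℂ)/2) :=
    Complex.Gamma_add_one _ (by simpa [neg_div, neg_eq_zero] using (div_ne_zero hn two_ne_zero))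
  have e1 : (1:ℂ) - (ν:ℂ)/2 = -(ν:ℂ)/2 + 1 := by ring
  rw [e1, hadd] at h
  unfold lommelA
  have e2 : ((-1:ℂ)) - 1 = ((-2:ℤ):ℂ) := by norm_num
  have e3 : (-1:ℂ)/2 + (ν:ℂ)/2 + 1/2 = (ν:ℂ)/2 := by ring
  have e4 : (-1:ℂ)/2 - (ν:ℂ)/2 + 1/2 = -(ν:ℂ)/2 := by ring
  rw [e2, Complex.cpow_intCast, e3, e4]
  have h2 : Complex.Gamma ((ν:ℂ)/2) * Complex.Gamma (-(ν:ℂ)/2)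
      = (π:ℂ) / Complex.sin ((π:ℂ)*ν/2) / (-(ν:ℂ)/2) := by
    have e5 : (π:ℂ) * ((ν:ℂ)/2) = (π:ℂ)*ν/2 := by ring
    rw [e5, eq_div_iff hs] at h
    rw [div_div, eq_div_iff (mul_ne_zero hs (by
      simpa [neg_div, neg_eq_zero] using (div_ne_zero hn (two_ne_zero' ℂ))))]
    linear_combination h
  rw [mul_assoc, h2]
  field_simp

lemma hE0aux (hint : ∀ n : ℤ, ν ≠ (n : ℝ)) :
    webere0 ν = -(2 * Complex.cos ((π:ℂ)*ν/2)^2) / (π:ℂ) := by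
  have hdouble : Complex.cos ((π:ℂ)*ν) = 2 * Complex.cos ((π:ℂ)*ν/2)^2 - 1 := by
    rw [show ((π:ℂ)*ν) = 2 * ((π:ℂ)*ν/2) by ring, Complex.cos_two_mul]
    ring_nf
  unfold webere0
  rw [hdouble]; ring

lemma hE1aux (hint : ∀ n : ℤ, ν ≠ (n : ℝ)) :
    weberem1 ν = -(2 * (ν:ℂ) * Complex.sin ((π:ℂ)*ν/2)^2) / (π:ℂ) := by
  have hpyth := Complex.sin_sq_add_cos_sq ((π:ℂ)*ν/2)
  have hdouble : Complex.cos ((π:ℂ)*ν) = 2 * Complex.cos ((π:ℂ)*ν/2)^2 - 1 := by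
    rw [show ((π:ℂ)*ν) = 2 * ((π:ℂ)*ν/2) by ring, Complex.cos_two_mul]
    ring_nf
  have hdouble' : Complex.cos ((π:ℂ)*ν) = 1 - 2 * Complex.sin ((π:ℂ)*ν/2)^2 := by
    linear_combination hdouble + 2*hpyth
  unfold weberem1
  rw [hdouble']; ring

lemma coeffJ (hint : ∀ n : ℤ, ν ≠ (n : ℝ)) :
    webere0 ν * (lommelA 0 (ν:ℂ) * Complex.sin ((0 - (ν:ℂ)) * (π:ℂ) / 2))
      + weberem1 ν * (lommelA (-1) (ν:ℂ) * Complex.sin (((-1:ℂ) - (ν:ℂ)) * (π:ℂ) / 2)) = 0 := by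
  have hn := nu_ne_zero hint
  have hs := sin_half_ne hint
  have hc := cos_half_ne hint
  have hpi : ((π:ℝ):ℂ) ≠ 0 := by exact_mod_cast Real.pi_ne_zero
  have e1 : ((0:ℂ) - (ν:ℂ)) * (π:ℂ) / 2 = -((π:ℂ)*ν/2) := by ring
  have e2 : (((-1):ℂ) - (ν:ℂ)) * (π:ℂ) / 2 = -((π:ℂ)/2 + (π:ℂ)*ν/2) := by ring
  rw [e1, e2, Complex.sin_neg, Complex.sin_neg, Complex.sin_add, Complex.sin_pi_div_two,
    Complex.cos_pi_div_two, lommelA_zero hint, lommelA_neg_one hint, hE0aux hint, hE1aux hint]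
  simp only [zero_mul, one_mul, mul_zero, mul_one, zero_add, add_zero, sub_zero, zero_sub,
    neg_neg, mul_neg, neg_mul]
  set C := Complex.cos ((π:ℂ)*ν/2) with hC
  set S := Complex.sin ((π:ℂ)*ν/2) with hS
  have t1 : -(2 * C ^ 2) / (π:ℂ) * ((π:ℂ) / (2 * C) * S) = -(C*S) := by
    field_simp
  have t2 : -(2 * (ν:ℂ) * S ^ 2) / (π:ℂ) * (-(π:ℂ) / (2 * (ν:ℂ) * S) * C) = S*C := by
    field_simp
  rw [t1, t2]
  ring

lemma coeffY (hint : ∀ n : ℤ, ν ≠ (n : ℝ)) :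
    webere0 ν * (lommelA 0 (ν:ℂ) * Complex.cos ((0 - (ν:ℂ)) * (π:ℂ) / 2))
      + weberem1 ν * (lommelA (-1) (ν:ℂ) * Complex.cos (((-1:ℂ) - (ν:ℂ)) * (π:ℂ) / 2)) = -1 := by
  have hn := nu_ne_zero hint
  have hs := sin_half_ne hint
  have hc := cos_half_ne hint
  have hpi : ((π:ℝ):ℂ) ≠ 0 := by exact_mod_cast Real.pi_ne_zero
  have hpyth := Complex.sin_sq_add_cos_sq ((π:ℂ)*ν/2)
  have e1 : ((0:ℂ) - (ν:ℂ)) * (π:ℂ) / 2 = -((π:ℂ)*ν/2) := by ring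
  have e2 : (((-1):ℂ) - (ν:ℂ)) * (π:ℂ) / 2 = -((π:ℂ)/2 + (π:ℂ)*ν/2) := by ring
  rw [e1, e2, Complex.cos_neg, Complex.cos_neg, Complex.cos_add, Complex.sin_pi_div_two,
    Complex.cos_pi_div_two, lommelA_zero hint, lommelA_neg_one hint, hE0aux hint, hE1aux hint]
  simp only [zero_mul, one_mul, mul_zero, mul_one, zero_add, add_zero, sub_zero, zero_sub,
    neg_neg, mul_neg, neg_mul]
  set C := Complex.cos ((π:ℂ)*ν/2) with hC
  set S := Complex.sin ((π:ℂ)*ν/2) with hS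
  have t1 : -(2 * C ^ 2) / (π:ℂ) * ((π:ℂ) / (2 * C) * C) = -C^2 := by
    field_simp
  have t2 : -(2 * (ν:ℂ) * S ^ 2) / (π:ℂ) * (-(π:ℂ) / (2 * (ν:ℂ) * S) * S) = S^2 := by
    field_simp
  rw [t1, t2]
  linear_combination -hpyth

lemma hasDerivAt_csin (N : ℂ) (θ : ℝ) :
    HasDerivAt (fun t : ℝ => Complex.sin (N * t)) (N * Complex.cos (N * θ)) θ := by
  have h : HasDerivAt (fun w : ℂ => Complex.sin (N * w)) (N * Complex.cos (N * θ)) (θ:ℂ) := by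
    have := (Complex.hasDerivAt_sin (N * θ)).comp (θ:ℂ) ((hasDerivAt_id (θ:ℂ)).const_mul N)
    exact this.congr_deriv (by ring)
  exact h.comp_ofReal

lemma hasDerivAt_ccos (N : ℂ) (θ : ℝ) :
    HasDerivAt (fun t : ℝ => Complex.cos (N * t)) (-N * Complex.sin (N * θ)) θ := by
  have h : HasDerivAt (fun w : ℂ => Complex.cos (N * w)) (-N * Complex.sin (N * θ)) (θ:ℂ) := by
    have := (Complex.hasDerivAt_cos (N * θ)).comp (θ:ℂ) ((hasDerivAt_id (θ:ℂ)).const_mul N)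
    exact this.congr_deriv (by ring)
  exact h.comp_ofReal

lemma hasDerivAt_sinpow (n : ℕ) (θ : ℝ) :
    HasDerivAt (fun t : ℝ => (Complex.sin t) ^ (n+1))
      (((n:ℂ)+1) * (Complex.sin θ) ^ n * Complex.cos θ) θ := by
  induction n with
  | zero => simpa using (Complex.hasDerivAt_sin (θ:ℂ)).comp_ofReal
  | succ m ih =>
      have hs : HasDerivAt (fun t : ℝ => Complex.sin (t:ℂ)) (Complex.cos (θ:ℂ)) θ :=
        (Complex.hasDerivAt_sin (θ:ℂ)).comp_ofReal
      have h2 := ih.mul hs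
      convert h2 using 1
      · rfl
      · ext t; simp only [Pi.mul_apply]; ring
      push_cast; ring

lemma cont_aux (N : ℂ) (n : ℕ) :
    Continuous (fun θ : ℝ => Complex.sin (N * θ) * (Complex.sin θ) ^ n) :=
  (Complex.continuous_sin.comp (continuous_const.mul Complex.continuous_ofReal)).mul
    ((Complex.continuous_sin.comp Complex.continuous_ofReal).pow n)

lemma cont_aux' (N : ℂ) (n : ℕ) :
    Continuous (fun θ : ℝ => Complex.cos (N * θ) * (Complex.sin θ) ^ n) :=
  (Complex.continuous_cos.comp (continuous_const.mul Complex.continuous_ofReal)).mul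
    ((Complex.continuous_sin.comp Complex.continuous_ofReal).pow n)

lemma sin_boundary (n : ℕ) : (Complex.sin ((π:ℝ):ℂ)) ^ (n+1) = 0 := by
  rw [← Complex.ofReal_sin, Real.sin_pi]
  simp

lemma intRec_sin (N : ℂ) (q : ℕ) :
    (((q:ℂ)+2)^2 - N^2) * (∫ θ in (0:ℝ)..π, Complex.sin (N * θ) * (Complex.sin θ)^(q+2))
      = ((q:ℂ)+2)*((q:ℂ)+1) * ∫ θ in (0:ℝ)..π, Complex.sin (N * θ) * (Complex.sin θ)^q := by
  set H : ℝ → ℂ := fun θ =>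
    N * Complex.cos (N * θ) * (Complex.sin θ)^(q+2)
      - ((q:ℂ)+2) * Complex.sin (N * θ) * (Complex.sin θ)^(q+1) * Complex.cos θ with hH
  have hderiv : ∀ θ ∈ Set.uIcc (0:ℝ) π, HasDerivAt H
      ((((q:ℂ)+2)^2 - N^2) * (Complex.sin (N * θ) * (Complex.sin θ)^(q+2))
        - ((q:ℂ)+2)*((q:ℂ)+1) * (Complex.sin (N * θ) * (Complex.sin θ)^q)) θ := by
    intro θ _
    have h1 := ((hasDerivAt_ccos N θ).const_mul N).mul (hasDerivAt_sinpow (q+1) θ)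
    have h2 := (((hasDerivAt_csin N θ).const_mul ((q:ℂ)+2)).mul
      (hasDerivAt_sinpow q θ)).mul ((Complex.hasDerivAt_cos (θ:ℂ)).comp_ofReal)
    have h := h1.sub h2
    convert h using 1
    · rfl
    · ext t; rw [hH]; simp only [Pi.mul_apply, Pi.sub_apply]
    have hc2 : Complex.cos ((θ:ℝ):ℂ)^2 = 1 - Complex.sin ((θ:ℝ):ℂ)^2 := by
      have := Complex.sin_sq_add_cos_sq ((θ:ℝ):ℂ)
      linear_combination this
    simp only [Pi.mul_apply]
    push_cast
    linear_combination (((q:ℂ)+2)*((q:ℂ)+1) * Complex.sin (N*θ) * Complex.sin ((θ:ℝ):ℂ)^q) * hc2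
  have hcont : Continuous (fun θ : ℝ =>
      (((q:ℂ)+2)^2 - N^2) * (Complex.sin (N * θ) * (Complex.sin θ)^(q+2))
        - ((q:ℂ)+2)*((q:ℂ)+1) * (Complex.sin (N * θ) * (Complex.sin θ)^q)) :=
    (continuous_const.mul (cont_aux N (q+2))).sub (continuous_const.mul (cont_aux N q))
  have key := intervalIntegral.integral_eq_sub_of_hasDerivAt hderiv
    (hcont.intervalIntegrable 0 π)
  have hb : H π - H 0 = 0 := by
    simp only [hH]
    rw [show (q+2) = (q+1)+1 by ring, sin_boundary, sin_boundary q]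
    push_cast
    simp
  rw [hb] at key
  rw [intervalIntegral.integral_sub ((continuous_const.fun_mul (cont_aux N (q+2))).intervalIntegrable 0 π)
    ((continuous_const.fun_mul (cont_aux N q)).intervalIntegrable 0 π),
    intervalIntegral.integral_const_mul, intervalIntegral.integral_const_mul] at key
  exact sub_eq_zero.mp key

lemma intRec_cos (N : ℂ) (q : ℕ) :
    (((q:ℂ)+2)^2 - N^2) * (∫ θ in (0:ℝ)..π, Complex.cos (N * θ) * (Complex.sin θ)^(q+2))
      = ((q:ℂ)+2)*((q:ℂ)+1) * ∫ θ in (0:ℝ)..π, Complex.cos (N * θ) * (Complex.sin θ)^q := by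
  set H : ℝ → ℂ := fun θ =>
    -(N * Complex.sin (N * θ) * (Complex.sin θ)^(q+2)
      + ((q:ℂ)+2) * Complex.cos (N * θ) * (Complex.sin θ)^(q+1) * Complex.cos θ) with hH
  have hderiv : ∀ θ ∈ Set.uIcc (0:ℝ) π, HasDerivAt H
      ((((q:ℂ)+2)^2 - N^2) * (Complex.cos (N * θ) * (Complex.sin θ)^(q+2))
        - ((q:ℂ)+2)*((q:ℂ)+1) * (Complex.cos (N * θ) * (Complex.sin θ)^q)) θ := by
    intro θ _
    have h1 := ((hasDerivAt_csin N θ).const_mul N).mul (hasDerivAt_sinpow (q+1) θ)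
    have h2 := (((hasDerivAt_ccos N θ).const_mul ((q:ℂ)+2)).mul
      (hasDerivAt_sinpow q θ)).mul ((Complex.hasDerivAt_cos (θ:ℂ)).comp_ofReal)
    have h := (h1.add h2).neg
    have hc2 : Complex.cos ((θ:ℝ):ℂ)^2 = 1 - Complex.sin ((θ:ℝ):ℂ)^2 := by
      have := Complex.sin_sq_add_cos_sq ((θ:ℝ):ℂ)
      linear_combination this
    convert h using 1
    · rfl
    · ext t; rw [hH]; simp only [Pi.mul_apply, Pi.add_apply, Pi.neg_apply]
    simp only [Pi.mul_apply]
    push_cast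
    linear_combination (((q:ℂ)+2)*((q:ℂ)+1) * Complex.cos (N*θ) * Complex.sin ((θ:ℝ):ℂ)^q) * hc2
  have hcont : Continuous (fun θ : ℝ =>
      (((q:ℂ)+2)^2 - N^2) * (Complex.cos (N * θ) * (Complex.sin θ)^(q+2))
        - ((q:ℂ)+2)*((q:ℂ)+1) * (Complex.cos (N * θ) * (Complex.sin θ)^q)) :=
    (continuous_const.mul (cont_aux' N (q+2))).sub (continuous_const.mul (cont_aux' N q))
  have key := intervalIntegral.integral_eq_sub_of_hasDerivAt hderiv
    (hcont.intervalIntegrable 0 π)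
  have hb : H π - H 0 = 0 := by
    simp only [hH]
    rw [show (q+2) = (q+1)+1 by ring, sin_boundary, sin_boundary q]
    push_cast
    simp
  rw [hb] at key
  rw [intervalIntegral.integral_sub ((continuous_const.fun_mul (cont_aux' N (q+2))).intervalIntegrable 0 π)
    ((continuous_const.fun_mul (cont_aux' N q)).intervalIntegrable 0 π),
    intervalIntegral.integral_const_mul, intervalIntegral.integral_const_mul] at key
  exact sub_eq_zero.mp key

lemma base_sin (N : ℂ) :
    N * ∫ θ in (0:ℝ)..π, Complex.sin (N * θ) = 1 - Complex.cos (N * π) := by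
  have hderiv : ∀ θ ∈ Set.uIcc (0:ℝ) π,
      HasDerivAt (fun t : ℝ => -Complex.cos (N * t)) (N * Complex.sin (N * θ)) θ := by
    intro θ _
    exact (hasDerivAt_ccos N θ).neg.congr_deriv (by ring)
  have hcont : Continuous (fun θ : ℝ => N * Complex.sin (N * θ)) :=
    continuous_const.mul (Complex.continuous_sin.comp (continuous_const.mul Complex.continuous_ofReal))
  have key := intervalIntegral.integral_eq_sub_of_hasDerivAt hderiv (hcont.intervalIntegrable 0 π)
  rw [intervalIntegral.integral_const_mul] at key
  rw [key]
  simp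
  ring

lemma base_cos (N : ℂ) :
    (1 - N^2) * ∫ θ in (0:ℝ)..π, Complex.cos (N * θ) * Complex.sin θ
      = 1 + Complex.cos (N * π) := by
  have hderiv : ∀ θ ∈ Set.uIcc (0:ℝ) π,
      HasDerivAt (fun t : ℝ => -(N * Complex.sin (N * t) * Complex.sin t
          + Complex.cos (N * t) * Complex.cos t))
        ((1 - N^2) * (Complex.cos (N * θ) * Complex.sin θ)) θ := by
    intro θ _
    have h1 := ((hasDerivAt_csin N θ).const_mul N).mul
      ((Complex.hasDerivAt_sin (θ:ℂ)).comp_ofReal)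
    have h2 := (hasDerivAt_ccos N θ).mul ((Complex.hasDerivAt_cos (θ:ℂ)).comp_ofReal)
    have h := (h1.add h2).neg
    convert h using 1
    · rfl
    · ext t; simp only [Pi.mul_apply, Pi.add_apply, Pi.neg_apply]
    ring
  have hcont : Continuous (fun θ : ℝ => (1 - N^2) * (Complex.cos (N * θ) * Complex.sin θ)) :=
    continuous_const.mul ((Complex.continuous_cos.comp
      (continuous_const.mul Complex.continuous_ofReal)).mul
      (Complex.continuous_sin.comp Complex.continuous_ofReal))
  have key := intervalIntegral.integral_eq_sub_of_hasDerivAt hderiv (hcont.intervalIntegrable 0 π)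
  rw [intervalIntegral.integral_const_mul] at key
  rw [key, ← Complex.ofReal_sin, Real.sin_pi]
  simp
  ring

lemma F_closed (N : ℂ) (k : ℕ) :
    (N * ∏ m ∈ Finset.range k, ((2*(m:ℂ)+2)^2 - N^2)) *
        (∫ θ in (0:ℝ)..π, Complex.sin (N * θ) * (Complex.sin θ)^(2*k))
      = (1 - Complex.cos (N * π)) * (2*k).factorial := by
  induction k with
  | zero => simpa using base_sin N
  | succ k ih =>
      have hrec := intRec_sin N (2*k)
      have e1 : (2*k+2) = 2*(k+1) := by ring
      rw [e1] at hrec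
      push_cast at hrec
      rw [Finset.prod_range_succ]
      have e2 : (2*((k:ℂ))+2)^2 - N^2 = ((2*k:ℂ)+2)^2 - N^2 := by push_cast; ring
      calc (N * ((∏ m ∈ Finset.range k, ((2*(m:ℂ)+2)^2 - N^2)) * ((2*(k:ℂ)+2)^2 - N^2))) *
            (∫ θ in (0:ℝ)..π, Complex.sin (N * θ) * (Complex.sin θ)^(2*(k+1)))
          = (N * ∏ m ∈ Finset.range k, ((2*(m:ℂ)+2)^2 - N^2)) *
            (((2*(k:ℂ))+2)^2 - N^2) * (∫ θ in (0:ℝ)..π, Complex.sin (N * θ) * (Complex.sin θ)^(2*(k+1))) := by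
              push_cast; ring
        _ = (N * ∏ m ∈ Finset.range k, ((2*(m:ℂ)+2)^2 - N^2)) *
            (((2*(k:ℂ))+2)*((2*(k:ℂ))+1) * (∫ θ in (0:ℝ)..π, Complex.sin (N * θ) * (Complex.sin θ)^(2*k))) := by
              rw [mul_assoc, hrec]
        _ = ((2*(k:ℂ))+2)*((2*(k:ℂ))+1) * ((N * ∏ m ∈ Finset.range k, ((2*(m:ℂ)+2)^2 - N^2)) *
            (∫ θ in (0:ℝ)..π, Complex.sin (N * θ) * (Complex.sin θ)^(2*k))) := by ring
        _ = ((2*(k:ℂ))+2)*((2*(k:ℂ))+1) * ((1 - Complex.cos (N * π)) * (2*k).factorial) := by rw [ih]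
        _ = (1 - Complex.cos (N * π)) * (2*(k+1)).factorial := by
              have : (2*(k+1)).factorial = (2*k+2) * ((2*k+1) * (2*k).factorial) := by
                rw [show 2*(k+1) = (2*k+1)+1 by ring, Nat.factorial_succ, Nat.factorial_succ]
              rw [this]
              push_cast; ring

lemma G_closed (N : ℂ) (k : ℕ) :
    (∏ m ∈ Finset.range (k+1), ((2*(m:ℂ)+1)^2 - N^2)) *
        (∫ θ in (0:ℝ)..π, Complex.cos (N * θ) * (Complex.sin θ)^(2*k+1))
      = (1 + Complex.cos (N * π)) * (2*k+1).factorial := by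
  induction k with
  | zero =>
      have h := base_cos N
      have e : (∏ m ∈ Finset.range (0+1), ((2*(m:ℂ)+1)^2 - N^2)) = 1 - N^2 := by
        rw [Finset.prod_range_one]; norm_num
      rw [e]
      simpa using h
  | succ k ih =>
      have hrec := intRec_cos N (2*k+1)
      push_cast at hrec
      rw [Finset.prod_range_succ]
      calc ((∏ m ∈ Finset.range (k+1), ((2*(m:ℂ)+1)^2 - N^2)) * ((2*((k+1:ℕ):ℂ)+1)^2 - N^2)) *
            (∫ θ in (0:ℝ)..π, Complex.cos (N * θ) * (Complex.sin θ)^(2*(k+1)+1))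
          = (∏ m ∈ Finset.range (k+1), ((2*(m:ℂ)+1)^2 - N^2)) *
            ((((2*k+1:ℂ))+2)^2 - N^2) * (∫ θ in (0:ℝ)..π, Complex.cos (N * θ) * (Complex.sin θ)^((2*k+1)+2)) := by
              rw [show 2*(k+1)+1 = (2*k+1)+2 by ring]
              push_cast; ring
        _ = (∏ m ∈ Finset.range (k+1), ((2*(m:ℂ)+1)^2 - N^2)) *
            ((((2*k+1:ℂ))+2)*(((2*k+1:ℂ))+1) * (∫ θ in (0:ℝ)..π, Complex.cos (N * θ) * (Complex.sin θ)^(2*k+1))) := by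
              rw [mul_assoc, hrec]
        _ = (((2*k+1:ℂ))+2)*(((2*k+1:ℂ))+1) * ((∏ m ∈ Finset.range (k+1), ((2*(m:ℂ)+1)^2 - N^2)) *
            (∫ θ in (0:ℝ)..π, Complex.cos (N * θ) * (Complex.sin θ)^(2*k+1))) := by ring
        _ = (((2*k+1:ℂ))+2)*(((2*k+1:ℂ))+1) * ((1 + Complex.cos (N * π)) * (2*k+1).factorial) := by rw [ih]
        _ = (1 + Complex.cos (N * π)) * (2*(k+1)+1).factorial := by
              have : (2*(k+1)+1).factorial = (2*k+3) * ((2*k+2) * (2*k+1).factorial) := by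
                rw [show 2*(k+1)+1 = (2*k+2)+1 by ring, Nat.factorial_succ, Nat.factorial_succ]
              rw [this]
              push_cast; ring

lemma hasSum_integrand (N z : ℂ) (θ : ℝ) :
    HasSum (fun k : ℕ =>
      (-1:ℂ)^k * z^(2*k) / ((2*k).factorial : ℂ) * (Complex.sin (N*θ) * (Complex.sin θ)^(2*k))
        - (-1:ℂ)^k * z^(2*k+1) / ((2*k+1).factorial : ℂ) *
            (Complex.cos (N*θ) * (Complex.sin θ)^(2*k+1)))
      (Complex.sin (N*θ - z * Complex.sin θ)) := by
  have hc := (Complex.hasSum_cos (z * Complex.sin (θ:ℂ))).mul_left (Complex.sin (N*θ))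
  have hs := (Complex.hasSum_sin (z * Complex.sin (θ:ℂ))).mul_left (Complex.cos (N*θ))
  have h := hc.sub hs
  rw [Complex.sin_sub]
  convert h using 2 with k
  · rfl
  rw [mul_pow, mul_pow]
  ring

lemma cont_f (N z : ℂ) (k : ℕ) : Continuous (fun θ : ℝ =>
    (-1:ℂ)^k * z^(2*k) / ((2*k).factorial : ℂ) * (Complex.sin (N*θ) * (Complex.sin θ)^(2*k))
      - (-1:ℂ)^k * z^(2*k+1) / ((2*k+1).factorial : ℂ) *
          (Complex.cos (N*θ) * (Complex.sin θ)^(2*k+1))) := by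
  apply Continuous.sub
  · exact continuous_const.mul (((Complex.continuous_sin.comp
      (continuous_const.mul Complex.continuous_ofReal)).mul
      ((Complex.continuous_sin.comp Complex.continuous_ofReal).pow _)))
  · exact continuous_const.mul (((Complex.continuous_cos.comp
      (continuous_const.mul Complex.continuous_ofReal)).mul
      ((Complex.continuous_sin.comp Complex.continuous_ofReal).pow _)))

lemma norm_f_le (ν : ℝ) (z : ℂ) (k : ℕ) (θ : ℝ) :
    ‖(-1:ℂ)^k * z^(2*k) / ((2*k).factorial : ℂ) * (Complex.sin ((ν:ℂ)*θ) * (Complex.sin θ)^(2*k))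
      - (-1:ℂ)^k * z^(2*k+1) / ((2*k+1).factorial : ℂ) *
          (Complex.cos ((ν:ℂ)*θ) * (Complex.sin θ)^(2*k+1))‖
      ≤ ‖z‖^(2*k) / ((2*k).factorial : ℝ) + ‖z‖^(2*k+1) / ((2*k+1).factorial : ℝ) := by
  have hsin : ‖Complex.sin ((ν:ℂ)*θ)‖ ≤ 1 := by
    rw [show ((ν:ℂ)*θ) = ((ν*θ : ℝ) : ℂ) by push_cast; ring, ← Complex.ofReal_sin]
    rw [Complex.norm_real]
    exact abs_le.mpr ⟨neg_one_le_sin _, sin_le_one _⟩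
  have hcos : ‖Complex.cos ((ν:ℂ)*θ)‖ ≤ 1 := by
    rw [show ((ν:ℂ)*θ) = ((ν*θ : ℝ) : ℂ) by push_cast; ring, ← Complex.ofReal_cos]
    rw [Complex.norm_real]
    exact abs_le.mpr ⟨neg_one_le_cos _, cos_le_one _⟩
  have hsin2 : ∀ n : ℕ, ‖(Complex.sin (θ:ℂ))^n‖ ≤ 1 := by
    intro n
    rw [norm_pow, ← Complex.ofReal_sin, Complex.norm_real]
    exact pow_le_one₀ (abs_nonneg _) (abs_le.mpr ⟨neg_one_le_sin _, sin_le_one _⟩)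
  refine (norm_sub_le _ _).trans (add_le_add ?_ ?_)
  · rw [norm_mul, norm_div, norm_mul, norm_pow, norm_pow, norm_neg, norm_one, one_pow, one_mul,
      norm_mul]
    have h1 : ‖Complex.sin ((ν:ℂ)*θ)‖ * ‖(Complex.sin (θ:ℂ))^(2*k)‖ ≤ 1 :=
      mul_le_one₀ hsin (norm_nonneg _) (hsin2 _)
    have h2 : ‖((2*k).factorial : ℂ)‖ = ((2*k).factorial : ℝ) := by
      simp
    rw [h2]
    calc ‖z‖^(2*k) / ((2*k).factorial:ℝ) * (‖Complex.sin ((ν:ℂ)*θ)‖ * ‖(Complex.sin (θ:ℂ))^(2*k)‖)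
        ≤ ‖z‖^(2*k) / ((2*k).factorial:ℝ) * 1 := by
          apply mul_le_mul_of_nonneg_left h1 (by positivity)
      _ = ‖z‖^(2*k) / ((2*k).factorial:ℝ) := mul_one _
  · rw [norm_mul, norm_div, norm_mul, norm_pow, norm_pow, norm_neg, norm_one, one_pow, one_mul,
      norm_mul]
    have h1 : ‖Complex.cos ((ν:ℂ)*θ)‖ * ‖(Complex.sin (θ:ℂ))^(2*k+1)‖ ≤ 1 :=
      mul_le_one₀ hcos (norm_nonneg _) (hsin2 _)
    have h2 : ‖((2*k+1).factorial : ℂ)‖ = ((2*k+1).factorial : ℝ) := by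
      simp
    rw [h2]
    calc ‖z‖^(2*k+1) / ((2*k+1).factorial:ℝ) * (‖Complex.cos ((ν:ℂ)*θ)‖ * ‖(Complex.sin (θ:ℂ))^(2*k+1)‖)
        ≤ ‖z‖^(2*k+1) / ((2*k+1).factorial:ℝ) * 1 := by
          apply mul_le_mul_of_nonneg_left h1 (by positivity)
      _ = ‖z‖^(2*k+1) / ((2*k+1).factorial:ℝ) := mul_one _

lemma summable_bound (z : ℂ) :
    Summable (fun k : ℕ => ‖z‖^(2*k) / ((2*k).factorial : ℝ)
      + ‖z‖^(2*k+1) / ((2*k+1).factorial : ℝ)) := by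
  have h := Real.summable_pow_div_factorial ‖z‖
  have h1 : Summable (fun k : ℕ => ‖z‖^(2*k) / ((2*k).factorial : ℝ)) :=
    h.comp_injective (fun a b hab => by omega)
  have h2 : Summable (fun k : ℕ => ‖z‖^(2*k+1) / ((2*k+1).factorial : ℝ)) :=
    h.comp_injective (fun a b hab => by omega)
  exact h1.add h2

lemma interchange (ν : ℝ) (z : ℂ) :
    (∫ θ in (0:ℝ)..π, Complex.sin ((ν:ℂ)*θ - z * Complex.sin θ))
      = ∑' k : ℕ, ((-1:ℂ)^k * z^(2*k) / ((2*k).factorial : ℂ) *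
          (∫ θ in (0:ℝ)..π, Complex.sin ((ν:ℂ)*θ) * (Complex.sin θ)^(2*k))
        - (-1:ℂ)^k * z^(2*k+1) / ((2*k+1).factorial : ℂ) *
          (∫ θ in (0:ℝ)..π, Complex.cos ((ν:ℂ)*θ) * (Complex.sin θ)^(2*k+1))) := by
  set f : ℕ → ℝ → ℂ := fun k θ =>
    (-1:ℂ)^k * z^(2*k) / ((2*k).factorial : ℂ) * (Complex.sin ((ν:ℂ)*θ) * (Complex.sin θ)^(2*k))
      - (-1:ℂ)^k * z^(2*k+1) / ((2*k+1).factorial : ℂ) *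
          (Complex.cos ((ν:ℂ)*θ) * (Complex.sin θ)^(2*k+1)) with hf
  have hmeas : MeasureTheory.volume.restrict (Set.Ioc (0:ℝ) π) (Set.Ioc (0:ℝ) π)ᶜ = 0 := by
    simp [MeasureTheory.Measure.restrict_apply, MeasurableSet.compl_iff]
  have hInt : ∀ k, MeasureTheory.IntegrableOn (f k) (Set.Ioc (0:ℝ) π) := fun k =>
    (cont_f (ν:ℂ) z k).integrableOn_Ioc
  have hsum_norm : Summable (fun k => ∫ θ in Set.Ioc (0:ℝ) π, ‖f k θ‖) := by
    apply Summable.of_nonneg_of_le (fun k => MeasureTheory.integral_nonneg (fun θ => norm_nonneg _))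
      (fun k => ?_) ((summable_bound z).mul_left π)
    calc (∫ θ in Set.Ioc (0:ℝ) π, ‖f k θ‖)
        ≤ ∫ _ in Set.Ioc (0:ℝ) π, (‖z‖^(2*k) / ((2*k).factorial : ℝ)
            + ‖z‖^(2*k+1) / ((2*k+1).factorial : ℝ)) := by
          apply MeasureTheory.integral_mono_of_nonneg
            (Filter.Eventually.of_forall (fun θ => norm_nonneg _))
            (MeasureTheory.integrable_const _)
            (Filter.Eventually.of_forall (fun θ => norm_f_le ν z k θ))
      _ = π * (‖z‖^(2*k) / ((2*k).factorial : ℝ) + ‖z‖^(2*k+1) / ((2*k+1).factorial : ℝ)) := by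
          rw [MeasureTheory.setIntegral_const, Real.volume_real_Ioc_of_le Real.pi_pos.le, smul_eq_mul]
          ring
  have key := MeasureTheory.integral_tsum_of_summable_integral_norm hInt hsum_norm
  have h1 : (∫ θ in (0:ℝ)..π, Complex.sin ((ν:ℂ)*θ - z * Complex.sin θ))
      = ∫ θ in Set.Ioc (0:ℝ) π, ∑' k, f k θ := by
    rw [intervalIntegral.integral_of_le Real.pi_pos.le]
    apply MeasureTheory.setIntegral_congr_fun measurableSet_Ioc
    intro θ _
    exact ((hasSum_integrand (ν:ℂ) z θ).tsum_eq).symm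
  rw [h1, ← key]
  apply tsum_congr
  intro k
  rw [← intervalIntegral.integral_of_le Real.pi_pos.le]
  simp only [hf]
  have c1 : Continuous (fun θ:ℝ => (-1:ℂ)^k * z^(2*k) / ((2*k).factorial:ℂ) *
      (Complex.sin ((ν:ℂ)*θ) * (Complex.sin θ)^(2*k))) := by fun_prop
  have c2 : Continuous (fun θ:ℝ => (-1:ℂ)^k * z^(2*k+1) / ((2*k+1).factorial:ℂ) *
      (Complex.cos ((ν:ℂ)*θ) * (Complex.sin θ)^(2*k+1))) := by fun_prop
  rw [intervalIntegral.integral_sub (c1.intervalIntegrable 0 π) (c2.intervalIntegrable 0 π),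
    intervalIntegral.integral_const_mul, intervalIntegral.integral_const_mul]

lemma summable_ratio (z : ℂ) (P Q : ℕ → ℂ) (hP : ∀ k, P (k+1) = P k * Q k)
    (hPne : ∀ k, P k ≠ 0)
    (hQ : Filter.Tendsto (fun k => ‖Q k‖) Filter.atTop Filter.atTop) :
    Summable (fun k : ℕ => (-1:ℂ)^k * z^(2*k) / P k) := by
  apply summable_of_ratio_norm_eventually_le (r := 1/2) (by norm_num)
  have hev : ∀ᶠ k in atTop, 2 * ‖z‖^2 ≤ ‖Q k‖ := hQ.eventually_ge_atTop _
  filter_upwards [hev] with k hk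
  have hQne : Q k ≠ 0 := by
    intro h
    exact hPne (k+1) (by rw [hP k, h, mul_zero])
  have hQpos : 0 < ‖Q k‖ := norm_pos_iff.mpr hQne
  have hfe : (-1:ℂ)^(k+1) * z^(2*(k+1)) / P (k+1)
      = ((-1:ℂ)^k * z^(2*k) / P k) * (-(z^2) / Q k) := by
    rw [hP k]
    field_simp [hPne k]
    ring
  rw [hfe, norm_mul]
  have hle : ‖-(z^2) / Q k‖ ≤ 1/2 := by
    rw [norm_div, norm_neg, norm_pow]
    rw [div_le_iff₀ hQpos]
    linarith
  calc ‖(-1:ℂ)^k * z^(2*k) / P k‖ * ‖-(z^2) / Q k‖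
      ≤ ‖(-1:ℂ)^k * z^(2*k) / P k‖ * (1/2) :=
        mul_le_mul_of_nonneg_left hle (norm_nonneg _)
    _ = 1/2 * ‖(-1:ℂ)^k * z^(2*k) / P k‖ := by ring

lemma tendsto_norm_q (N : ℂ) (b : ℕ) :
    Filter.Tendsto (fun k : ℕ => ‖(2*(k:ℂ)+b)^2 - N^2‖) Filter.atTop Filter.atTop := by
  apply tendsto_atTop_mono (f := fun k : ℕ => (k:ℝ) - ‖N^2‖)
  · intro k
    have h1 : ‖(2*(k:ℂ)+b)^2‖ - ‖N^2‖ ≤ ‖(2*(k:ℂ)+b)^2 - N^2‖ :=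
      norm_sub_norm_le _ _
    have h2 : ((k:ℝ)) ≤ ‖(2*(k:ℂ)+b)^2‖ := by
      rw [show (2*(k:ℂ)+b) = ((2*k+b : ℕ) : ℂ) by push_cast; ring, norm_pow,
        Complex.norm_natCast]
      have hnat : k ≤ (2*k+b)^2 := le_trans (by omega) (Nat.le_self_pow (by norm_num) _)
      exact_mod_cast hnat
    linarith
  · exact Filter.tendsto_atTop_add_const_right _ _ tendsto_natCast_atTop_atTop

lemma lommelCoeff_zero_eq (N : ℂ) (k : ℕ) :
    lommelCoeff 0 N k = ∏ m ∈ Finset.range k, ((2*(m:ℂ)+1)^2 - N^2) := by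
  apply Finset.prod_congr rfl
  intro m _
  ring_nf

lemma lommelCoeff_negone_eq (N : ℂ) (k : ℕ) :
    lommelCoeff (-1) N (k+1) = (-(N^2)) * ∏ m ∈ Finset.range k, ((2*(m:ℂ)+2)^2 - N^2) := by
  unfold lommelCoeff
  rw [Finset.prod_range_succ']
  have h0 : ((-1:ℂ) + 2 * (((0:ℕ):ℂ) + 1) - 1)^2 - N^2 = -(N^2) := by norm_num
  rw [h0, mul_comm]
  congr 1
  apply Finset.prod_congr rfl
  intro m _
  push_cast
  ring

lemma lommelCoeff_zero_ne (ν : ℝ) (hint : ∀ n : ℤ, ν ≠ (n : ℝ)) (k : ℕ) :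
    lommelCoeff 0 (ν:ℂ) k ≠ 0 := by
  rw [lommelCoeff_zero_eq]
  apply Finset.prod_ne_zero_iff.mpr
  intro m _
  have e : (2*(m:ℂ)+1)^2 - (ν:ℂ)^2 = ((2*m+1 : ℕ):ℂ)^2 - (ν:ℂ)^2 := by push_cast; ring
  rw [e]
  exact sq_sub_ne hint _

lemma lommelCoeff_negone_ne (ν : ℝ) (hint : ∀ n : ℤ, ν ≠ (n : ℝ)) (k : ℕ) :
    lommelCoeff (-1) (ν:ℂ) (k+1) ≠ 0 := by
  rw [lommelCoeff_negone_eq]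
  apply mul_ne_zero
  · simpa using pow_ne_zero 2 (nu_ne_zero hint)
  · apply Finset.prod_ne_zero_iff.mpr
    intro m _
    have e : (2*(m:ℂ)+2)^2 - (ν:ℂ)^2 = ((2*m+2 : ℕ):ℂ)^2 - (ν:ℂ)^2 := by push_cast; ring
    rw [e]
    exact sq_sub_ne hint _

lemma summable0 (ν : ℝ) (hint : ∀ n : ℤ, ν ≠ (n : ℝ)) (z : ℂ) :
    Summable (fun k : ℕ => (-1:ℂ)^k * z^(2*k) / lommelCoeff 0 (ν:ℂ) (k+1)) := by
  apply summable_ratio z _ (fun k => (2*(k:ℂ)+((3:ℕ):ℂ))^2 - (ν:ℂ)^2)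
  · intro k
    rw [lommelCoeff_zero_eq, lommelCoeff_zero_eq, Finset.prod_range_succ]
    congr 1
    push_cast
    ring
  · exact fun k => lommelCoeff_zero_ne ν hint (k+1)
  · exact tendsto_norm_q (ν:ℂ) 3

lemma summable1 (ν : ℝ) (hint : ∀ n : ℤ, ν ≠ (n : ℝ)) (z : ℂ) :
    Summable (fun k : ℕ => (-1:ℂ)^k * z^(2*k) / lommelCoeff (-1) (ν:ℂ) (k+1)) := by
  apply summable_ratio z _ (fun k => (2*(k:ℂ)+((2:ℕ):ℂ))^2 - (ν:ℂ)^2)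
  · intro k
    rw [lommelCoeff_negone_eq, lommelCoeff_negone_eq, Finset.prod_range_succ]
    push_cast
    ring
  · exact fun k => lommelCoeff_negone_ne ν hint k
  · exact tendsto_norm_q (ν:ℂ) 2

lemma termwise (ν : ℝ) (hint : ∀ n : ℤ, ν ≠ (n : ℝ)) (z : ℂ) (k : ℕ) :
    (-1:ℂ)^k * z^(2*k) / ((2*k).factorial : ℂ) *
        (∫ θ in (0:ℝ)..π, Complex.sin ((ν:ℂ)*θ) * (Complex.sin θ)^(2*k))
      - (-1:ℂ)^k * z^(2*k+1) / ((2*k+1).factorial : ℂ) *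
        (∫ θ in (0:ℝ)..π, Complex.cos ((ν:ℂ)*θ) * (Complex.sin θ)^(2*k+1))
    = ((π:ℝ):ℂ) * webere0 ν * z * ((-1:ℂ)^k * z^(2*k) / lommelCoeff 0 (ν:ℂ) (k+1))
      + ((π:ℝ):ℂ) * weberem1 ν * ((-1:ℂ)^k * z^(2*k) / lommelCoeff (-1) (ν:ℂ) (k+1)) := by
  have hN := nu_ne_zero hint
  have hpi : ((π:ℝ):ℂ) ≠ 0 := by exact_mod_cast Real.pi_ne_zero
  rw [lommelCoeff_zero_eq, lommelCoeff_negone_eq]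
  set B := ∏ m ∈ Finset.range k, ((2*(m:ℂ)+2)^2 - (ν:ℂ)^2) with hBdef
  set D := ∏ m ∈ Finset.range (k+1), ((2*(m:ℂ)+1)^2 - (ν:ℂ)^2) with hDdef
  have hB : B ≠ 0 := by
    rw [hBdef]
    apply Finset.prod_ne_zero_iff.mpr
    intro m _
    have e : (2*(m:ℂ)+2)^2 - (ν:ℂ)^2 = ((2*m+2 : ℕ):ℂ)^2 - (ν:ℂ)^2 := by push_cast; ring
    rw [e]; exact sq_sub_ne hint _
  have hD : D ≠ 0 := by
    rw [hDdef]
    apply Finset.prod_ne_zero_iff.mpr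
    intro m _
    have e : (2*(m:ℂ)+1)^2 - (ν:ℂ)^2 = ((2*m+1 : ℕ):ℂ)^2 - (ν:ℂ)^2 := by push_cast; ring
    rw [e]; exact sq_sub_ne hint _
  have hfac1 : (((2*k).factorial : ℕ) : ℂ) ≠ 0 := Nat.cast_ne_zero.mpr (Nat.factorial_ne_zero _)
  have hfac2 : (((2*k+1).factorial : ℕ) : ℂ) ≠ 0 := Nat.cast_ne_zero.mpr (Nat.factorial_ne_zero _)
  have hcc : Complex.cos ((ν:ℂ)*((π:ℝ):ℂ)) = Complex.cos (((π:ℝ):ℂ)*(ν:ℂ)) := by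
    rw [mul_comm]
  have hIs : (∫ θ in (0:ℝ)..π, Complex.sin ((ν:ℂ)*θ) * (Complex.sin θ)^(2*k))
      = (1 - Complex.cos (((π:ℝ):ℂ) * (ν:ℂ))) * ((2*k).factorial : ℂ) / ((ν:ℂ) * B) := by
    rw [eq_div_iff (mul_ne_zero hN hB)]
    have h := F_closed (ν:ℂ) k
    rw [← hBdef] at h
    linear_combination h - (((2*k).factorial : ℕ) : ℂ) * hcc
  have hIc : (∫ θ in (0:ℝ)..π, Complex.cos ((ν:ℂ)*θ) * (Complex.sin θ)^(2*k+1))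
      = (1 + Complex.cos (((π:ℝ):ℂ) * (ν:ℂ))) * ((2*k+1).factorial : ℂ) / D := by
    rw [eq_div_iff hD]
    have h := G_closed (ν:ℂ) k
    rw [← hDdef] at h
    linear_combination h + (((2*k+1).factorial : ℕ) : ℂ) * hcc
  rw [hIs, hIc]
  unfold webere0 weberem1
  set c := Complex.cos (((π:ℝ):ℂ) * (ν:ℂ)) with hcdef
  set f1 := (((2*k).factorial : ℕ) : ℂ) with hf1def
  set f2 := (((2*k+1).factorial : ℕ) : ℂ) with hf2def
  have e1 : (-1:ℂ)^k * z^(2*k) / f1 * ((1 - c) * f1 / ((ν:ℂ) * B))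
      = (1-c) * ((-1:ℂ)^k * z^(2*k)) / ((ν:ℂ)*B) := by
    field_simp
  have e2 : (-1:ℂ)^k * z^(2*k+1) / f2 * ((1 + c) * f2 / D)
      = (1+c) * ((-1:ℂ)^k * z^(2*k)) * z / D := by
    field_simp; ring
  have e3 : ((π:ℝ):ℂ) * (-(1 + c)/((π:ℝ):ℂ)) * z * ((-1:ℂ)^k * z^(2*k) / D)
      = -((1+c) * ((-1:ℂ)^k * z^(2*k)) * z / D) := by
    field_simp
  have e4 : ((π:ℝ):ℂ) * (-(ν:ℂ) * (1 - c)/((π:ℝ):ℂ)) * ((-1:ℂ)^k * z^(2*k) / (-((ν:ℂ)^2) * B))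
      = (1-c) * ((-1:ℂ)^k * z^(2*k)) / ((ν:ℂ)*B) := by
    rw [show (-((ν:ℂ)^2) * B) = -((ν:ℂ)^2 * B) by ring, div_neg]
    field_simp
  rw [e1, e2, e3, e4]
  ring

lemma weber_series (ν : ℝ) (hint : ∀ n : ℤ, ν ≠ (n : ℝ)) (z : ℂ) :
    weberE (ν:ℂ) z = webere0 ν * lommels 0 (ν:ℂ) z + weberem1 ν * lommels (-1) (ν:ℂ) z := by
  have hpi : ((π:ℝ):ℂ) ≠ 0 := by exact_mod_cast Real.pi_ne_zero
  unfold weberE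
  have hcongr : (∫ θ in (0:ℝ)..π, Complex.sin ((ν:ℂ)*θ - z*((Real.sin θ : ℝ) : ℂ)))
      = ∫ θ in (0:ℝ)..π, Complex.sin ((ν:ℂ)*θ - z*Complex.sin (θ:ℂ)) :=
    intervalIntegral.integral_congr (fun θ _ => by rw [Complex.ofReal_sin])
  rw [hcongr, interchange ν z, tsum_congr (termwise ν hint z)]
  rw [Summable.tsum_add ((summable0 ν hint z).mul_left _) ((summable1 ν hint z).mul_left _),
    tsum_mul_left, tsum_mul_left]
  unfold lommels
  rw [show ((0:ℂ)+1) = 1 by norm_num, show ((-1:ℂ)+1) = 0 by norm_num,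
    Complex.cpow_one, Complex.cpow_zero, one_mul]
  field_simp

end WeberAux

/-- For real noninteger `ν > 0`:
`𝐄_ν(z) = 𝐞₀(ν) S^(0)_{0,ν}(z) + 𝐞₋₁(ν) S^(0)_{-1,ν}(z)` and
`𝐄_ν(z) = 𝐞₀(ν) S_{0,ν}(z) + 𝐞₋₁(ν) S_{-1,ν}(z) - Y_ν(z)` on the cut plane. -/
theorem weberE_eq_lommel (ν : ℝ) (hν : 0 < ν) (hint : ∀ n : ℤ, ν ≠ (n : ℝ)) :
    ∀ z ∈ Complex.slitPlane,
      (weberE (ν : ℂ) z = webere0 ν * lommelS0 0 (ν : ℂ) z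
        + weberem1 ν * lommelS0 (-1) (ν : ℂ) z) ∧
      (weberE (ν : ℂ) z = webere0 ν * lommelS 0 (ν : ℂ) z
        + weberem1 ν * lommelS (-1) (ν : ℂ) z - besselY (ν : ℂ) z) := by
  intro z hz
  have hmain := weber_series ν hint z
  have hJ := coeffJ hint
  have hY := coeffY hint
  constructor
  · unfold lommelS0
    rw [hmain]
    linear_combination (-(besselJ (ν:ℂ) z)) * hJ
  · unfold lommelS
    rw [hmain]
    linear_combination (-(besselJ (ν:ℂ) z)) * hJ + (besselY (ν:ℂ) z) * hY
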